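/- arXiv:2405.13625 — 2 statements merged into one kernel-verified Lean document; each statement's English description precedes it below -/
import Mathlib

section
/- Let X* be an n×n symmetric PSD matrix and ι ⊆ [n] of size r with σ_r((X*)^ι) = τ > 0 (i.e., the columns indexed by ι are linearly independent). Then the principal submatrix (X*)^ι_ι satisfies λ_r((X*)^ι_ι) ≥ τ²/(n‖X*‖₂); in particular (X*)^ι_ι is positive definite. -/
open Matrix
open scoped Matrix.Norms.L2Operator

/-- `svals A i` is the `(i+1)`-th largest singular value of `A`. -/
noncomputable def svals {p q : ℕ} (A : Matrix (Fin p) (Fin q) ℝ) (i : ℕ) : ℝ :=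
  if h : i < q then
    Real.sqrt ((show (Aᵀ * A).IsHermitian by
        simpa [Matrix.conjTranspose_eq_transpose_of_trivial] using
          Matrix.isHermitian_conjTranspose_mul_self A).eigenvalues
      (Tuple.sort (show (Aᵀ * A).IsHermitian by
        simpa [Matrix.conjTranspose_eq_transpose_of_trivial] using
          Matrix.isHermitian_conjTranspose_mul_self A).eigenvalues ⟨q - 1 - i, by omega⟩))
  else 0

lemma isHermitian_transpose_mul_self_real {p q : ℕ} (A : Matrix (Fin p) (Fin q) ℝ) :
    (Aᵀ * A).IsHermitian := by
  simpa [Matrix.conjTranspose_eq_transpose_of_trivial] using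
    Matrix.isHermitian_conjTranspose_mul_self A

open scoped MatrixOrder in
lemma exists_sqrt_aux {n : Type*} [Fintype n] [DecidableEq n] {Xs : Matrix n n ℝ}
    (hXs : Xs.PosSemidef) : ∃ S : Matrix n n ℝ, S * S = Xs ∧ S.PosSemidef :=
  ⟨CFC.sqrt Xs, CFC.sqrt_mul_sqrt_self Xs hXs.nonneg, (CFC.sqrt_nonneg Xs).posSemidef⟩


/-- Rayleigh-type lower bound: if all eigenvalues of a real symmetric matrix are `≥ c`,
then `c * (x ⬝ᵥ x) ≤ x ⬝ᵥ M *ᵥ x`. -/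
lemma rayleigh_le {m : Type*} [Fintype m] [DecidableEq m] {M : Matrix m m ℝ}
    (hM : M.IsHermitian) (c : ℝ) (h : ∀ i, c ≤ hM.eigenvalues i) (x : m → ℝ) :
    c * (x ⬝ᵥ x) ≤ x ⬝ᵥ (M *ᵥ x) := by
  set U : Matrix m m ℝ := (hM.eigenvectorUnitary : Matrix m m ℝ) with hU
  have hUU : U * star U = 1 := (Matrix.mem_unitaryGroup_iff).mp hM.eigenvectorUnitary.2
  have hdecomp : M - c • 1 = U * diagonal (fun i => hM.eigenvalues i - c) * star U := by
    have hsp := hM.spectral_theorem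
    have hd : diagonal (fun i => hM.eigenvalues i - c) =
        diagonal (RCLike.ofReal ∘ hM.eigenvalues) - c • (1 : Matrix m m ℝ) := by
      rw [← Matrix.diagonal_one, ← Matrix.diagonal_smul, ← Matrix.diagonal_sub]
      ext i j
      simp [Matrix.one_apply, Matrix.diagonal_apply, RCLike.ofReal]
    rw [hd, Matrix.mul_sub, Matrix.sub_mul]
    conv_lhs => rw [hsp]
    rw [Unitary.conjStarAlgAut_apply]
    congr 1
    rw [Matrix.mul_smul, Matrix.smul_mul, Matrix.mul_one, hUU]
  have hpsd : (M - c • 1).PosSemidef := by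
    rw [hdecomp]
    exact (Matrix.posSemidef_diagonal_iff.mpr
      fun i => sub_nonneg.mpr (h i)).mul_mul_conjTranspose_same U
  have := hpsd.dotProduct_mulVec_nonneg x
  simp only [star_trivial, sub_mulVec, smul_mulVec, one_mulVec, dotProduct_sub,
    dotProduct_smul, smul_eq_mul] at this
  linarith

lemma norm_sq_dot {n : Type*} [Fintype n] (z : n → ℝ) :
    ‖(EuclideanSpace.equiv n ℝ).symm z‖ ^ 2 = z ⬝ᵥ z := by
  rw [EuclideanSpace.norm_eq, Real.sq_sqrt (Finset.sum_nonneg fun i _ => sq_nonneg _)]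
  simp [dotProduct, sq]

/-- For a PSD matrix, `‖Xs u‖² ≤ ‖Xs‖ ⟨u, Xs u⟩`. -/
lemma quad_bound {n : Type*} [Fintype n] [DecidableEq n] {Xs : Matrix n n ℝ}
    (hXs : Xs.PosSemidef) (u : n → ℝ) :
    (Xs *ᵥ u) ⬝ᵥ (Xs *ᵥ u) ≤ ‖Xs‖ * (u ⬝ᵥ (Xs *ᵥ u)) := by
  obtain ⟨S, hSS, hSpsd⟩ := exists_sqrt_aux hXs
  have hSsymm : Sᵀ = S := by
    have := hSpsd.1
    rwa [← conjTranspose_eq_transpose_of_trivial]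
  have hXu : Xs *ᵥ u = S *ᵥ (S *ᵥ u) := by rw [mulVec_mulVec, hSS]
  have hnormS : ‖S‖ * ‖S‖ = ‖Xs‖ := by
    rw [← S.l2_opNorm_conjTranspose_mul_self]
    congr 1
    rw [conjTranspose_eq_transpose_of_trivial, hSsymm, hSS]
  have hdot : (S *ᵥ u) ⬝ᵥ (S *ᵥ u) = u ⬝ᵥ (Xs *ᵥ u) := by
    rw [dotProduct_comm, dotProduct_mulVec, ← mulVec_transpose, hSsymm, mulVec_mulVec, hSS]
    exact dotProduct_comm _ _
  have hle := S.l2_opNorm_mulVec ((EuclideanSpace.equiv n ℝ).symm (S *ᵥ u))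
  have hsq : (Xs *ᵥ u) ⬝ᵥ (Xs *ᵥ u) ≤ (‖S‖ * ‖(EuclideanSpace.equiv n ℝ).symm (S *ᵥ u)‖) ^ 2 := by
    rw [← norm_sq_dot (Xs *ᵥ u), hXu]
    exact pow_le_pow_left₀ (norm_nonneg _) hle 2
  calc (Xs *ᵥ u) ⬝ᵥ (Xs *ᵥ u) ≤ (‖S‖ * ‖(EuclideanSpace.equiv n ℝ).symm (S *ᵥ u)‖) ^ 2 := hsq
    _ = (‖S‖ * ‖S‖) * ‖(EuclideanSpace.equiv n ℝ).symm (S *ᵥ u)‖ ^ 2 := by ring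
    _ = ‖Xs‖ * (u ⬝ᵥ (Xs *ᵥ u)) := by rw [hnormS, norm_sq_dot, hdot]

/-- `svals A (q-1)` squared bounds all eigenvalues of `Aᴴ A` from below. -/
lemma svals_le_eig {p q : ℕ} (A : Matrix (Fin p) (Fin q) ℝ) (hq : 0 < q) (j : Fin q) :
    svals A (q - 1) ^ 2 ≤ (isHermitian_transpose_mul_self_real A).eigenvalues j := by
  set g := (isHermitian_transpose_mul_self_real A).eigenvalues with hg
  have hsv : svals A (q - 1) = Real.sqrt (g (Tuple.sort g ⟨q - 1 - (q - 1), by omega⟩)) := by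
    rw [svals, dif_pos (by omega)]
  rw [hsv, Real.sq_sqrt (show 0 ≤ g _ from A.eigenvalues_conjTranspose_mul_self_nonneg _)]
  have hmono := Tuple.monotone_sort g
  have h0 : (⟨q - 1 - (q - 1), by omega⟩ : Fin q) ≤ (Tuple.sort g).symm j := by
    simp [Fin.le_def]
  have := hmono h0
  simpa using this

/-- If `X*` is PSD and the `r` columns indexed by `ι` satisfy `σ_r((X*)^ι) = τ > 0`,
then every eigenvalue of `(X*)^ι_ι` is at least `τ²/(n‖X*‖₂)`; in particular
`(X*)^ι_ι` is positive definite. -/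
theorem stmt4 {n r : ℕ} (Xs : Matrix (Fin n) (Fin n) ℝ) (hXs : Xs.PosSemidef)
    (ι : Fin r → Fin n) (hι : Function.Injective ι)
    (τ : ℝ) (hτ : svals (Xs.submatrix id ι) (r - 1) = τ) (hτpos : 0 < τ)
    (hsub : (Xs.submatrix ι ι).IsHermitian) :
    (∀ i : Fin r, τ ^ 2 / (n * ‖Xs‖) ≤ hsub.eigenvalues i) ∧
      (Xs.submatrix ι ι).PosDef := by
  have hr : 0 < r := by
    rcases Nat.eq_zero_or_pos r with h | h
    · exfalso
      subst h
      rw [svals, dif_neg (by omega)] at hτ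
      linarith
    · exact h
  have hn : 0 < n := (ι ⟨0, hr⟩).pos
  set A := Xs.submatrix id ι with hA
  -- main quadratic-form estimate
  have key : ∀ i : Fin r, τ ^ 2 ≤ ‖Xs‖ * hsub.eigenvalues i := by
    intro i
    set v : Fin r → ℝ := ⇑(hsub.eigenvectorBasis i) with hv
    have hv1 : v ⬝ᵥ v = 1 := by
      rw [← norm_sq_dot v]
      have h1 : ‖hsub.eigenvectorBasis i‖ = 1 := hsub.eigenvectorBasis.orthonormal.1 i
      have h2 : (EuclideanSpace.equiv (Fin r) ℝ).symm v = hsub.eigenvectorBasis i := rfl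
      rw [h2, h1, one_pow]
    have heig : Xs.submatrix ι ι *ᵥ v = hsub.eigenvalues i • v := hsub.mulVec_eigenvectorBasis i
    have hmu : v ⬝ᵥ (Xs.submatrix ι ι *ᵥ v) = hsub.eigenvalues i := by
      rw [heig]
      simp [dotProduct_smul, hv1, smul_eq_mul]
    set u : Fin n → ℝ := fun j => ∑ i', if j = ι i' then v i' else 0 with hu
    have ha : A *ᵥ v = Xs *ᵥ u := by
      funext k
      simp only [mulVec, dotProduct, hA, submatrix_apply, id, hu, Finset.mul_sum, mul_ite,
        mul_zero]
      rw [Finset.sum_comm]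
      simp
    have hud : ∀ w : Fin n → ℝ, u ⬝ᵥ w = ∑ i', v i' * w (ι i') := by
      intro w
      simp only [dotProduct, hu, Finset.sum_mul, ite_mul, zero_mul]
      rw [Finset.sum_comm]
      simp
    have hq2 : u ⬝ᵥ (Xs *ᵥ u) = hsub.eigenvalues i := by
      rw [← ha, hud, ← hmu]
      simp [mulVec, dotProduct, submatrix_apply, hA]
    have hray := rayleigh_le (isHermitian_transpose_mul_self_real A) (τ ^ 2)
      (fun j => hτ ▸ svals_le_eig A hr j) v
    have hAvv : v ⬝ᵥ ((Aᴴ * A) *ᵥ v) = (A *ᵥ v) ⬝ᵥ (A *ᵥ v) := by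
      rw [← mulVec_mulVec, dotProduct_mulVec, conjTranspose_eq_transpose_of_trivial,
        vecMul_transpose]
    calc τ ^ 2 = τ ^ 2 * (v ⬝ᵥ v) := by rw [hv1, mul_one]
      _ ≤ v ⬝ᵥ ((Aᴴ * A) *ᵥ v) := hray
      _ = (A *ᵥ v) ⬝ᵥ (A *ᵥ v) := hAvv
      _ = (Xs *ᵥ u) ⬝ᵥ (Xs *ᵥ u) := by rw [ha]
      _ ≤ ‖Xs‖ * (u ⬝ᵥ (Xs *ᵥ u)) := quad_bound hXs u
      _ = ‖Xs‖ * hsub.eigenvalues i := by rw [hq2]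
  have heignn : ∀ i : Fin r, 0 ≤ hsub.eigenvalues i := fun i =>
    (hXs.submatrix ι).eigenvalues_nonneg i
  have hXn : 0 < ‖Xs‖ := by
    rcases (norm_nonneg Xs).lt_or_eq with h | h
    · exact h
    · exfalso
      have := key ⟨0, hr⟩
      rw [← h, zero_mul] at this
      nlinarith
  have bound : ∀ i : Fin r, τ ^ 2 / (n * ‖Xs‖) ≤ hsub.eigenvalues i := by
    intro i
    have h1 : τ ^ 2 / (n * ‖Xs‖) ≤ τ ^ 2 / ‖Xs‖ :=
      div_le_div_of_nonneg_left (sq_nonneg τ) hXn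
        (le_mul_of_one_le_left (norm_nonneg _) (by exact_mod_cast hn))
    have h2 : τ ^ 2 / ‖Xs‖ ≤ hsub.eigenvalues i := by
      rw [div_le_iff₀ hXn]
      linarith [key i]
    linarith
  have hcpos : 0 < τ ^ 2 / (n * ‖Xs‖) :=
    div_pos (pow_pos hτpos 2) (mul_pos (by exact_mod_cast hn) hXn)
  refine ⟨bound, Matrix.PosDef.of_dotProduct_mulVec_pos hsub fun x hx => ?_⟩
  have hxx : 0 < x ⬝ᵥ x := by
    rw [← norm_sq_dot x]
    have : (EuclideanSpace.equiv (Fin r) ℝ).symm x ≠ 0 := by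
      simpa using hx
    exact pow_pos (norm_pos_iff.mpr this) 2
  have := rayleigh_le hsub _ bound x
  simp only [star_trivial]
  nlinarith
end

section
/- Let {X^{(t)}}_{t∈[0,1]} be a continuous path of n×n real symmetric matrices such that for every t, rank(X^{(t)}) ≤ r, and such that whenever X^{(t)} ⪰ 0, its r-th largest eigenvalue is strictly positive. If X^{(0)} ⪰ 0, then X^{(t)} ⪰ 0 for all t ∈ [0,1]. -/
open Matrix
open scoped Matrix.Norms.L2Operator

namespace Stmt13Aux

variable {n : ℕ}

lemma transpose_eq_self {A : Matrix (Fin n) (Fin n) ℝ} (hA : A.IsHermitian) : Aᵀ = A := by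
  ext i j
  simpa [Matrix.conjTranspose_apply] using congrFun (congrFun hA i) j

lemma qf_continuous_mat (x : Fin n → ℝ) :
    Continuous fun M : Matrix (Fin n) (Fin n) ℝ => x ⬝ᵥ M.mulVec x := by
  simp only [dotProduct, Matrix.mulVec]
  exact continuous_finset_sum _ fun i _ =>
    continuous_const.mul (continuous_finset_sum _ fun j _ =>
      ((continuous_id.matrix_elem i j).mul continuous_const))

lemma qf_continuous_vec (A : Matrix (Fin n) (Fin n) ℝ) :
    Continuous fun x : Fin n → ℝ => x ⬝ᵥ A.mulVec x := by
  simp only [dotProduct, Matrix.mulVec]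
  exact continuous_finset_sum _ fun i _ =>
    (continuous_apply i).mul (continuous_finset_sum _ fun j _ =>
      continuous_const.mul (continuous_apply j))

/-- A Hermitian matrix of rank at most `r` which is positive definite on an
`r`-dimensional subspace is positive semidefinite. -/
lemma posSemidef_of_posdef_on_subspace {r : ℕ} (B : Matrix (Fin n) (Fin n) ℝ)
    (hB : B.IsHermitian) (hrank : B.rank ≤ r)
    (V : Submodule ℝ (Fin n → ℝ)) (hV : Module.finrank ℝ V = r)
    (hpos : ∀ x ∈ V, x ≠ 0 → 0 < x ⬝ᵥ B.mulVec x) : B.PosSemidef := by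
  set K := LinearMap.ker B.mulVecLin with hK
  have hrange : Module.finrank ℝ (LinearMap.range B.mulVecLin) ≤ r := hrank
  have hrn : Module.finrank ℝ (LinearMap.range B.mulVecLin)
      + Module.finrank ℝ K = n := by
    simpa [Module.finrank_fin_fun] using
      LinearMap.finrank_range_add_finrank_ker B.mulVecLin
  have hKV : K ⊓ V = ⊥ := by
    rw [Submodule.eq_bot_iff]
    rintro x ⟨hxK, hxV⟩
    by_contra hx
    have h1 := hpos x hxV hx
    have h2 : B.mulVec x = 0 := by
      simpa [Matrix.mulVecLin_apply] using (LinearMap.mem_ker.mp hxK)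
    rw [h2, dotProduct_zero] at h1
    exact lt_irrefl 0 h1
  have htop : K ⊔ V = ⊤ := by
    apply Submodule.eq_top_of_finrank_eq
    have h1 : Module.finrank ℝ ↥(K ⊔ V) + Module.finrank ℝ ↥(K ⊓ V)
        = Module.finrank ℝ K + Module.finrank ℝ V :=
      Submodule.finrank_sup_add_finrank_inf_eq K V
    rw [hKV] at h1
    simp only [finrank_bot, add_zero] at h1
    have hle : Module.finrank ℝ ↥(K ⊔ V) ≤ Module.finrank ℝ (Fin n → ℝ) :=
      Submodule.finrank_le _
    have hge : n ≤ Module.finrank ℝ K + Module.finrank ℝ V := by omega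
    rw [Module.finrank_fin_fun] at hle ⊢
    omega
  have key : ∀ y : Fin n → ℝ, 0 ≤ y ⬝ᵥ B.mulVec y := by
    intro y
    have hy : y ∈ K ⊔ V := htop ▸ Submodule.mem_top
    rcases Submodule.mem_sup.mp hy with ⟨k, hk, v, hv, rfl⟩
    have hBk : B.mulVec k = 0 := by
      simpa [Matrix.mulVecLin_apply] using (LinearMap.mem_ker.mp hk)
    have hkv : k ⬝ᵥ B.mulVec v = 0 := by
      rw [Matrix.dotProduct_mulVec]
      have hvm : k ᵥ* B = 0 := by
        calc k ᵥ* B = k ᵥ* Bᵀᵀ := by rw [Matrix.transpose_transpose]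
          _ = Bᵀ *ᵥ k := Matrix.vecMul_transpose _ _
          _ = B *ᵥ k := by rw [transpose_eq_self hB]
          _ = 0 := hBk
      rw [hvm, zero_dotProduct]
    have hform : (k + v) ⬝ᵥ B.mulVec (k + v) = v ⬝ᵥ B.mulVec v := by
      rw [Matrix.mulVec_add, hBk, zero_add, add_dotProduct, hkv, zero_add]
    rw [hform]
    rcases eq_or_ne v 0 with hv0 | hv0
    · simp [hv0]
    · exact le_of_lt (hpos v hv hv0)
  exact Matrix.PosSemidef.of_dotProduct_mulVec_nonneg hB (fun x => by simpa using key x)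

lemma rank_ge_of_svals_pos {r : ℕ} (hr : 0 < r) {A : Matrix (Fin n) (Fin n) ℝ}
    (h : 0 < svals A (r - 1)) : r ≤ A.rank := by
  by_cases hn : r - 1 < n
  · rw [svals, dif_pos hn] at h
    set hA := (show (Aᵀ * A).IsHermitian by simpa [Matrix.conjTranspose_eq_transpose_of_trivial] using Matrix.isHermitian_conjTranspose_mul_self A) with hAdef
    set σ := Tuple.sort hA.eigenvalues with hσ
    have h0 : 0 < hA.eigenvalues (σ ⟨n - 1 - (r - 1), by omega⟩) := Real.sqrt_pos.mp h
    have hmono := Tuple.monotone_sort hA.eigenvalues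
    have key : ∀ j : Fin r, hA.eigenvalues (σ ⟨n - r + j.val, by have := j.2; omega⟩) ≠ 0 := by
      intro j
      have hj := j.2
      have hle : (⟨n - 1 - (r - 1), by omega⟩ : Fin n) ≤ ⟨n - r + j.val, by omega⟩ := by
        simp only [Fin.le_def]
        omega
      have hm := hmono hle
      simp only [Function.comp_apply, ← hσ] at hm
      exact ne_of_gt (lt_of_lt_of_le h0 hm)
    let F : Fin r → {i // hA.eigenvalues i ≠ 0} :=
      fun j => ⟨σ ⟨n - r + j.val, by have := j.2; omega⟩, key j⟩
    have hF : Function.Injective F := by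
      intro a b hab
      have h1 : σ ⟨n - r + a.val, by have := a.2; omega⟩
          = σ ⟨n - r + b.val, by have := b.2; omega⟩ := congrArg Subtype.val hab
      have h2 := σ.injective h1
      have h3 : n - r + a.val = n - r + b.val := congrArg Fin.val h2
      exact Fin.ext (by omega)
    have hcard : r ≤ Fintype.card {i // hA.eigenvalues i ≠ 0} := by
      simpa using Fintype.card_le_of_injective F hF
    have heq := hA.rank_eq_card_non_zero_eigs
    rw [Matrix.rank_transpose_mul_self] at heq
    omega
  · rw [svals, dif_neg hn] at h
    exact absurd h (by norm_num)

lemma psd_posdef_on_range {A : Matrix (Fin n) (Fin n) ℝ} (hA : A.PosSemidef) :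
    ∀ x ∈ LinearMap.range A.mulVecLin, x ≠ 0 → 0 < x ⬝ᵥ A.mulVec x := by
  rintro x ⟨y, rfl⟩ hx
  set x := A.mulVecLin y with hxdef
  have hge : 0 ≤ x ⬝ᵥ A.mulVec x := by simpa using hA.dotProduct_mulVec_nonneg x
  rcases hge.lt_or_eq with hlt | heq
  · exact hlt
  · exfalso
    have h0 : A.mulVec x = 0 := by
      have := (hA.dotProduct_mulVec_zero_iff x).mp (by simpa using heq.symm)
      exact this
    have hxx : x ⬝ᵥ x = 0 := by
      have hx1 : x = A.mulVec y := by rw [hxdef, Matrix.mulVecLin_apply]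
      calc x ⬝ᵥ x = x ⬝ᵥ A.mulVec y := by rw [← hx1]
        _ = (x ᵥ* A) ⬝ᵥ y := Matrix.dotProduct_mulVec _ _ _
        _ = (A.mulVec x) ⬝ᵥ y := by
            rw [show x ᵥ* A = A *ᵥ x from by
              calc x ᵥ* A = x ᵥ* Aᵀᵀ := by rw [Matrix.transpose_transpose]
                _ = Aᵀ *ᵥ x := Matrix.vecMul_transpose _ _
                _ = A *ᵥ x := by rw [transpose_eq_self hA.1]]
        _ = 0 := by rw [h0, zero_dotProduct]
    exact hx (dotProduct_self_eq_zero.mp hxx)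

/-- Perturbation lemma: near a PSD matrix of exact rank `r > 0`, every Hermitian
matrix of rank at most `r` is PSD. -/
lemma exists_delta (A : Matrix (Fin n) (Fin n) ℝ) (hA : A.PosSemidef)
    (hrpos : 0 < A.rank) :
    ∃ δ > (0:ℝ), ∀ B : Matrix (Fin n) (Fin n) ℝ, B.IsHermitian → B.rank ≤ A.rank →
      (∀ i j, |B i j - A i j| < δ) → B.PosSemidef := by
  set V := LinearMap.range A.mulVecLin with hVdef
  have hVrank : Module.finrank ℝ V = A.rank := rfl
  -- compact set: unit sphere of V
  set K : Set (Fin n → ℝ) := Metric.sphere 0 1 ∩ ↑V with hKdef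
  have hKc : IsCompact K :=
    (isCompact_sphere (0 : Fin n → ℝ) 1).inter_right V.closed_of_finiteDimensional
  have hVne : V ≠ ⊥ := by
    intro hbot
    rw [hbot] at hVrank
    simp [finrank_bot] at hVrank
    omega
  obtain ⟨v, hvV, hv0⟩ := Submodule.exists_mem_ne_zero_of_ne_bot hVne
  have hKne : K.Nonempty := by
    refine ⟨(‖v‖:ℝ)⁻¹ • v, ?_, ?_⟩
    · rw [mem_sphere_zero_iff_norm]
      exact norm_smul_inv_norm (𝕜 := ℝ) hv0
    · exact V.smul_mem _ hvV
  obtain ⟨x₀, hx₀K, hmin⟩ := hKc.exists_isMinOn hKne (qf_continuous_vec A).continuousOn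
  set m := x₀ ⬝ᵥ A.mulVec x₀ with hmdef
  have hx₀V : x₀ ∈ V := hx₀K.2
  have hx₀n : ‖x₀‖ = 1 := mem_sphere_zero_iff_norm.mp hx₀K.1
  have hx₀0 : x₀ ≠ 0 := by
    intro h0; rw [h0] at hx₀n; simp at hx₀n
  have hm : 0 < m := psd_posdef_on_range hA x₀ hx₀V hx₀0
  refine ⟨m / ((n:ℝ)^2 + 1), by positivity, ?_⟩
  intro B hB hrB hclose
  apply posSemidef_of_posdef_on_subspace B hB (by omega : B.rank ≤ A.rank) V hVrank
  intro x hxV hx0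
  -- first prove it for unit vectors of V
  have hunit : ∀ y ∈ K, 0 < y ⬝ᵥ B.mulVec y := by
    intro y hyK
    have hyn : ‖y‖ = 1 := mem_sphere_zero_iff_norm.mp hyK.1
    have hAy : m ≤ y ⬝ᵥ A.mulVec y := hmin hyK
    have hdiff : y ⬝ᵥ B.mulVec y - y ⬝ᵥ A.mulVec y = y ⬝ᵥ (B - A).mulVec y := by
      rw [Matrix.sub_mulVec, dotProduct_sub]
    have hbnd : |y ⬝ᵥ (B - A).mulVec y| ≤ (n:ℝ)^2 * (m / ((n:ℝ)^2 + 1)) := by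
      have hye : ∀ i, |y i| ≤ 1 := by
        intro i
        simpa [hyn] using norm_le_pi_norm y i
      calc |y ⬝ᵥ (B - A).mulVec y|
          ≤ ∑ i, |y i * ((B - A).mulVec y i)| :=
            Finset.abs_sum_le_sum_abs _ _
        _ ≤ ∑ _i : Fin n, (n:ℝ) * (m / ((n:ℝ)^2 + 1)) := by
            apply Finset.sum_le_sum
            intro i _
            rw [abs_mul]
            have h1 : |(B - A).mulVec y i| ≤ (n:ℝ) * (m / ((n:ℝ)^2 + 1)) := by
              calc |(B - A).mulVec y i| = |∑ j, (B i j - A i j) * y j| := by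
                    simp [Matrix.mulVec, dotProduct, Matrix.sub_apply]
                _ ≤ ∑ j, |(B i j - A i j) * y j| := Finset.abs_sum_le_sum_abs _ _
                _ ≤ ∑ _j : Fin n, (m / ((n:ℝ)^2 + 1)) * 1 := by
                    apply Finset.sum_le_sum
                    intro j _
                    rw [abs_mul]
                    exact mul_le_mul (le_of_lt (hclose i j)) (hye j) (abs_nonneg _)
                      (by positivity)
                _ = (n:ℝ) * (m / ((n:ℝ)^2 + 1)) := by
                    simp [Finset.sum_const, mul_comm]
            calc |y i| * |(B - A).mulVec y i| ≤ 1 * ((n:ℝ) * (m / ((n:ℝ)^2 + 1))) :=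
                  mul_le_mul (hye i) h1 (abs_nonneg _) zero_le_one
              _ = (n:ℝ) * (m / ((n:ℝ)^2 + 1)) := one_mul _
        _ = (n:ℝ)^2 * (m / ((n:ℝ)^2 + 1)) := by
            simp [Finset.sum_const]
            ring
    have hlt : (n:ℝ)^2 * (m / ((n:ℝ)^2 + 1)) < m := by
      rw [mul_div_assoc']
      rw [div_lt_iff₀ (by positivity)]
      nlinarith
    have : y ⬝ᵥ A.mulVec y - |y ⬝ᵥ (B - A).mulVec y| ≤ y ⬝ᵥ B.mulVec y := by
      have habs := neg_abs_le (y ⬝ᵥ (B - A).mulVec y)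
      linarith [hdiff ▸ habs]
    linarith
  -- scale
  have hxn : (0:ℝ) < ‖x‖ := norm_pos_iff.mpr hx0
  set y := (‖x‖:ℝ)⁻¹ • x with hydef
  have hyK : y ∈ K := by
    constructor
    · rw [mem_sphere_zero_iff_norm]
      exact norm_smul_inv_norm (𝕜 := ℝ) hx0
    · exact V.smul_mem _ hxV
  have hxy : x = ‖x‖ • y := by
    rw [hydef, smul_inv_smul₀ (ne_of_gt hxn)]
  have hq : x ⬝ᵥ B.mulVec x = ‖x‖ * (‖x‖ * (y ⬝ᵥ B.mulVec y)) := by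
    conv_lhs => rw [hxy]
    rw [Matrix.mulVec_smul, smul_dotProduct, dotProduct_smul]
    simp [smul_eq_mul]
  rw [hq]
  have := hunit y hyK
  positivity

end Stmt13Aux

/-- Continuity argument: along a continuous path of symmetric matrices of rank at most
`r` such that whenever `X^{(t)} ⪰ 0` its `r`-th largest eigenvalue is strictly positive,
positive semidefiniteness at `t = 0` propagates to all `t ∈ [0,1]`. -/
theorem stmt13 {n r : ℕ} (hr : 0 < r)
    (X : ℝ → Matrix (Fin n) (Fin n) ℝ)
    (hcont : ContinuousOn X (Set.Icc 0 1))
    (hherm : ∀ t ∈ Set.Icc (0:ℝ) 1, (X t).IsHermitian)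
    (hrank : ∀ t ∈ Set.Icc (0:ℝ) 1, (X t).rank ≤ r)
    (hpos : ∀ t ∈ Set.Icc (0:ℝ) 1, (X t).PosSemidef → 0 < svals (X t) (r - 1))
    (h0 : (X 0).PosSemidef) :
    ∀ t ∈ Set.Icc (0:ℝ) 1, (X t).PosSemidef := by
  classical
  set T := Set.Icc (0:ℝ) 1 with hT
  haveI : PreconnectedSpace T := Subtype.preconnectedSpace isPreconnected_Icc
  have hXc : Continuous fun t : T => X ↑t := hcont.restrict
  set S : Set T := {t : T | (X ↑t).PosSemidef} with hS
  -- closed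
  have hclosed : IsClosed S := by
    have : S = ⋂ x : Fin n → ℝ, {t : T | 0 ≤ x ⬝ᵥ (X ↑t).mulVec x} := by
      ext t
      simp only [Set.mem_iInter, Set.mem_setOf_eq, hS]
      constructor
      · intro ht x
        simpa using ht.dotProduct_mulVec_nonneg x
      · intro h
        exact Matrix.PosSemidef.of_dotProduct_mulVec_nonneg (hherm ↑t t.2) (fun x => by simpa using h x)
    rw [this]
    exact isClosed_iInter fun x =>
      isClosed_le continuous_const ((Stmt13Aux.qf_continuous_mat x).comp hXc)
  -- open
  have hopen : IsOpen S := by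
    rw [isOpen_iff_mem_nhds]
    intro t₀ ht₀
    have hA : (X ↑t₀).PosSemidef := ht₀
    have hrk : (X ↑t₀).rank = r := by
      have h1 := hrank ↑t₀ t₀.2
      have h2 := Stmt13Aux.rank_ge_of_svals_pos hr (hpos ↑t₀ t₀.2 hA)
      omega
    obtain ⟨δ, hδ, hkey⟩ := Stmt13Aux.exists_delta (X ↑t₀) hA (by omega)
    have hUopen : IsOpen (⋂ i : Fin n, ⋂ j : Fin n,
        {t : T | |X ↑t i j - X ↑t₀ i j| < δ}) := by
      apply isOpen_iInter_of_finite
      intro i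
      apply isOpen_iInter_of_finite
      intro j
      have hc : Continuous fun t : T => |X ↑t i j - X ↑t₀ i j| :=
        (((continuous_apply j).comp ((continuous_apply i).comp hXc)).sub
          continuous_const).abs
      exact isOpen_lt hc continuous_const
    have ht₀U : t₀ ∈ ⋂ i : Fin n, ⋂ j : Fin n,
        {t : T | |X ↑t i j - X ↑t₀ i j| < δ} := by
      simp only [Set.mem_iInter, Set.mem_setOf_eq]
      intro i j
      simpa using hδ
    refine Filter.mem_of_superset (hUopen.mem_nhds ht₀U) ?_
    intro s hs
    simp only [Set.mem_iInter, Set.mem_setOf_eq] at hs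
    have hBrank : (X ↑s).rank ≤ (X ↑t₀).rank := by
      rw [hrk]; exact hrank ↑s s.2
    exact hkey (X ↑s) (hherm ↑s s.2) hBrank (fun i j => hs i j)
  -- nonempty, conclude
  have h0T : (0:ℝ) ∈ T := ⟨le_refl 0, zero_le_one⟩
  have hSne : S.Nonempty := ⟨⟨0, h0T⟩, h0⟩
  have hall : S = Set.univ := IsClopen.eq_univ ⟨hclosed, hopen⟩ hSne
  intro t ht
  have : (⟨t, ht⟩ : T) ∈ S := hall ▸ Set.mem_univ _
  exact this
end
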